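/- arXiv:1303.1081 — 6 statements merged into one kernel-verified Lean document; each statement's English description precedes it below -/
import Mathlib

section
/- Every β-expansion of a point of I_β is generated by the random β-transformation for some choice of ω: for every x ∈ I_β and every sequence (aₙ)_{n≥1} ∈ {0,1}^ℕ with x = Σ_{n=1}^∞ aₙ β^{−n}, there exists ω ∈ Ω such that dₙ(ω,x) = aₙ for all n ≥ 1, where (dₙ(ω,x)) is the digit sequence defined by x₀ = x, dₙ = 0 if x_{n−1} ∈ L or (x_{n−1} ∈ S and ωₙ = 0), dₙ = 1 otherwise, and xₙ = βx_{n−1} − dₙ. -/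
/-! Take `ω = a`. Writing `π_β` for the value of a digit sequence, the tails satisfy
`β π_β(a) - a₀ = π_β(σa)` and `0 ≤ π_β ≤ 1/(β-1)`. The second fact forces `π_β(a) ≥ 1/β`
when `a₀ = 1` and `π_β(a) ≤ 1/(β(β-1))` when `a₀ = 0`, so the digit chosen by `R_β` at
`(a, π_β(a))` is `a₀`, and `R_β (a, π_β(a)) = (σa, π_β(σa))`. -/

open MeasureTheory Set Filter
open scoped Classical ENNReal

namespace RandomBeta

noncomputable section

/-- The left shift on `{0,1}^ℕ`. -/
def shift (ω : ℕ → Bool) : ℕ → Bool := fun n => ω (n + 1)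

/-- The digit complementation `ω̄ᵢ = 1 - ωᵢ`. -/
def compSeq (ω : ℕ → Bool) : ℕ → Bool := fun n => !(ω n)

/-- The interval `I_β = [0, 1/(β-1)]`. -/
def Ibeta (β : ℝ) : Set ℝ := Set.Icc 0 (1 / (β - 1))

/-- `L = [0, 1/β)`. -/
def Lset (β : ℝ) : Set ℝ := Set.Ico 0 (1 / β)

/-- `S = [1/β, 1/(β(β-1))]`. -/
def Sset (β : ℝ) : Set ℝ := Set.Icc (1 / β) (1 / (β * (β - 1)))

/-- `R = (1/(β(β-1)), 1/(β-1)]`. -/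
def Rset (β : ℝ) : Set ℝ := Set.Ioc (1 / (β * (β - 1))) (1 / (β - 1))

/-- The digit produced at the point `x` when the coin shows `a`:
`0` on `L`, `a` on `S`, `1` on `R`. -/
def digitB (β x : ℝ) (a : Bool) : Bool :=
  if x < 1 / β then false else if x ≤ 1 / (β * (β - 1)) then a else true

/-- One step of the random β-transformation on the second coordinate:
`T₀ x = βx` on `L`, `T_a x` on `S`, `T₁ x = βx - 1` on `R`. -/
def rStep (β x : ℝ) (a : Bool) : ℝ := β * x - (if digitB β x a then 1 else 0)

/-- The random β-transformation in skew-product form. -/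
def Rmap (β : ℝ) (p : (ℕ → Bool) × ℝ) : (ℕ → Bool) × ℝ :=
  (shift p.1, rStep β p.2 (p.1 0))

/-- The random β-transformation `K_β` (shifting `ω` only on `S`). -/
def Kmap (β : ℝ) (p : (ℕ → Bool) × ℝ) : (ℕ → Bool) × ℝ :=
  if p.2 < 1 / β then (p.1, β * p.2)
  else if p.2 ≤ 1 / (β * (β - 1)) then (shift p.1, β * p.2 - (if p.1 0 then 1 else 0))
  else (p.1, β * p.2 - 1)

/-- `R^n_{β,w}(x)`: the second coordinate of `R_β^n (ω, x)` for any `ω` starting with `w`. -/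
def rItin (β x : ℝ) (w : List Bool) : ℝ := w.foldl (rStep β) x

/-- `r(w) = R^n_{β,w}(1)`. -/
def rW (β : ℝ) (w : List Bool) : ℝ := rItin β 1 w

/-- The (unnormalised) density `ρ*_β`. -/
def rhoStar (β x : ℝ) : ℝ :=
  ∑' n : ℕ, ((2 * β) ^ n)⁻¹ * ∑ w : Fin n → Bool,
    ((Set.Icc (0 : ℝ) (rW β (List.ofFn w))).indicator 1 x
      + (Set.Icc (rItin β (1 / (β - 1) - 1) (List.ofFn w)) (1 / (β - 1))).indicator 1 x)

/-- `m` is the `(1/2, 1/2)` Bernoulli measure on `{0,1}^ℕ`. -/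
def IsBernoulliHalf (m : Measure (ℕ → Bool)) : Prop :=
  IsProbabilityMeasure m ∧
    ∀ (n : ℕ) (w : Fin n → Bool), m {ω | ∀ i : Fin n, ω i = w i} = (2 : ℝ≥0∞)⁻¹ ^ n

/-- The probability measure `μ_β` on `I_β` with density `ρ*_β / ∫ ρ*_β` w.r.t. Lebesgue. -/
def muBeta (β : ℝ) : Measure ℝ :=
  (volume.restrict (Ibeta β)).withDensity
    (fun x => ENNReal.ofReal (rhoStar β x / ∫ y in Ibeta β, rhoStar β y))

/-- `l(w) = Σ ωᵢ 2^(i-1)`. -/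
def lVal : List Bool → ℕ
  | [] => 0
  | a :: t => (if a then 1 else 0) + 2 * lVal t

/-- `v(w) = Σ_{k<n} β^(-k) + l(w)/(2β)^n`. -/
def vVal (β : ℝ) (w : List Bool) : ℝ :=
  (∑ k ∈ Finset.range w.length, ((β : ℝ) ^ k)⁻¹) + (lVal w : ℝ) / (2 * β) ^ w.length

/-- The sublevel `E_w = Ω × [0, r(w)] × [v(w), v(w) + (2β)^(-n))` of the tower. -/
def Eset (β : ℝ) (w : List Bool) : Set ((ℕ → Bool) × ℝ × ℝ) :=
  {p | p.2.1 ∈ Set.Icc 0 (rW β w) ∧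
    p.2.2 ∈ Set.Ico (vVal β w) (vVal β w + ((2 * β) ^ w.length)⁻¹)}

/-- The tower `E`. -/
def Etower (β : ℝ) : Set ((ℕ → Bool) × ℝ × ℝ) := ⋃ w : List Bool, Eset β w

/-- The step from `w` to `wa` is of type `T₁`. -/
def stepT1 (β : ℝ) (w : List Bool) (a : Bool) : Prop := digitB β (rW β w) a = true

/-- `C₁(wa) = v(wa) - v(w)/(2β)`. -/
def C1 (β : ℝ) (w : List Bool) (a : Bool) : ℝ := vVal β (w ++ [a]) - vVal β w / (2 * β)

/-- `C₂(wa) = 1/(2β) + Σ (2β)^(-(m+1)) - v(w)/(2β)`, summing over pairs `(u, b)` with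
the step `u → ub` of type `T₁` and `v(u) < v(w)`. -/
def C2 (β : ℝ) (w : List Bool) : ℝ :=
  (2 * β)⁻¹ +
    (∑' u : {q : List Bool × Bool // stepT1 β q.1 q.2 ∧ vVal β q.1 < vVal β w},
      ((2 * β) ^ (u.1.1.length + 1))⁻¹) - vVal β w / (2 * β)

/-- The action of `ψ` on points of the sublevel `E_w`. -/
def psiAux (β : ℝ) (w : List Bool) (p : (ℕ → Bool) × ℝ × ℝ) : (ℕ → Bool) × ℝ × ℝ :=
  if digitB β (rW β w) (p.1 0) then
    if p.2.1 < 1 / β then (shift p.1, β * p.2.1, p.2.2 / (2 * β) + C2 β w)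
    else (shift p.1, β * p.2.1 - 1, p.2.2 / (2 * β) + C1 β w (p.1 0))
  else (shift p.1, β * p.2.1, p.2.2 / (2 * β) + C1 β w (p.1 0))

/-- The tower map `ψ : E → E` (the identity off the tower). -/
def psi (β : ℝ) (p : (ℕ → Bool) × ℝ × ℝ) : (ℕ → Bool) × ℝ × ℝ :=
  if h : ∃ w : List Bool, p ∈ Eset β w then psiAux β h.choose p else p

/-- The reflection `P(ω, x, y) = (ω̄, 1/(β-1) - x, -y)`. -/
def Pmap (β : ℝ) (p : (ℕ → Bool) × ℝ × ℝ) : (ℕ → Bool) × ℝ × ℝ :=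
  (compSeq p.1, 1 / (β - 1) - p.2.1, -p.2.2)

/-- The reflected tower `Ē = P(E)`. -/
def Ebar (β : ℝ) : Set ((ℕ → Bool) × ℝ × ℝ) := Pmap β '' Etower β

/-- The exceptional set `F_w ⊆ E_w` (empty unless `r(w) ∈ R`). -/
def Fset (β : ℝ) (w : List Bool) : Set ((ℕ → Bool) × ℝ × ℝ) :=
  {p | p ∈ Eset β w ∧ p.1 0 = false ∧ p.2.1 ∈ Sset β ∧ rW β w ∈ Rset β}

/-- The swap map `Q` interchanging `ψ(F_w)` with `ψ(F̄_w̄) = P(ψ(F_w))`. -/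
def Qmap (β : ℝ) (p : (ℕ → Bool) × ℝ × ℝ) : (ℕ → Bool) × ℝ × ℝ :=
  if ∃ w : List Bool, p ∈ psi β '' Fset β w then (p.1, p.2.1 + 1, -p.2.2)
  else if ∃ w : List Bool, p ∈ Pmap β '' (psi β '' Fset β w) then (p.1, p.2.1 - 1, -p.2.2)
  else p

/-- `ψ` extended to `E ∪ Ē`, acting by `P ∘ ψ ∘ P⁻¹` on `Ē`. -/
def psiFull (β : ℝ) (p : (ℕ → Bool) × ℝ × ℝ) : (ℕ → Bool) × ℝ × ℝ :=
  if p ∈ Etower β then psi β p else Pmap β (psi β (Pmap β p))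

/-- The corrected tower map `ψ̃ = Q ∘ ψ`. -/
def psiTilde (β : ℝ) : ((ℕ → Bool) × ℝ × ℝ) → ((ℕ → Bool) × ℝ × ℝ) :=
  Qmap β ∘ psiFull β

/-- `h(ω, x, n) = #{0 ≤ i ≤ n-1 : π₂(K_β^i(ω,x)) ∈ S}`. -/
def hCount (β : ℝ) (ω : ℕ → Bool) (x : ℝ) (n : ℕ) : ℕ :=
  ((Finset.range n).filter (fun i => ((Kmap β)^[i] (ω, x)).2 ∈ Sset β)).card

/-- `π_β(a) = Σ aᵢ β^(-(i+1))`. -/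
def piB (β : ℝ) (a : ℕ → Bool) : ℝ :=
  ∑' i : ℕ, (if a i then (1 : ℝ) else 0) * ((β : ℝ) ^ (i + 1))⁻¹

/-- `𝒩ₙ(x; β)`: the number of words of length `n` extendable to a β-expansion of `x`. -/
def Ncount (β x : ℝ) (n : ℕ) : ℕ :=
  {a : Fin n → Bool | ∃ b : ℕ → Bool, (∀ i : Fin n, b i = a i) ∧ x = piB β b}.ncard

end

section DigitExpansion

variable {β : ℝ}

lemma summable_geometric_inv_pow_succ (hβ : 1 < β) :
    Summable fun i : ℕ => ((β : ℝ) ^ (i + 1))⁻¹ := by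
  have hr : (0 : ℝ) ≤ β⁻¹ := inv_nonneg.2 (by linarith)
  simp_rw [← inv_pow, pow_succ]
  exact (summable_geometric_of_lt_one hr (inv_lt_one_of_one_lt₀ hβ)).mul_right β⁻¹

lemma tsum_inv_pow_succ (hβ : 1 < β) : ∑' i : ℕ, ((β : ℝ) ^ (i + 1))⁻¹ = 1 / (β - 1) := by
  have hr : (0 : ℝ) ≤ β⁻¹ := inv_nonneg.2 (by linarith)
  have hβ1 : β - 1 ≠ 0 := by linarith
  simp_rw [← inv_pow, pow_succ]
  rw [tsum_mul_right, tsum_geometric_of_lt_one hr (inv_lt_one_of_one_lt₀ hβ)]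
  field_simp

lemma piB_term_nonneg (hβ : 0 ≤ β) (a : ℕ → Bool) (i : ℕ) :
    0 ≤ (if a i then (1 : ℝ) else 0) * ((β : ℝ) ^ (i + 1))⁻¹ := by
  have := inv_nonneg.2 (pow_nonneg hβ (i + 1))
  split <;> simp [this]

lemma piB_term_le (hβ : 0 ≤ β) (a : ℕ → Bool) (i : ℕ) :
    (if a i then (1 : ℝ) else 0) * ((β : ℝ) ^ (i + 1))⁻¹ ≤ ((β : ℝ) ^ (i + 1))⁻¹ := by
  have := inv_nonneg.2 (pow_nonneg hβ (i + 1))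
  split <;> simp [this]

lemma summable_piB (hβ : 1 < β) (a : ℕ → Bool) :
    Summable fun i : ℕ => (if a i then (1 : ℝ) else 0) * ((β : ℝ) ^ (i + 1))⁻¹ :=
  (summable_geometric_inv_pow_succ hβ).of_nonneg_of_le (piB_term_nonneg (by linarith) a)
    (piB_term_le (by linarith) a)

lemma piB_nonneg (hβ : 0 ≤ β) (a : ℕ → Bool) : 0 ≤ piB β a :=
  tsum_nonneg (piB_term_nonneg hβ a)

lemma piB_le (hβ : 1 < β) (a : ℕ → Bool) : piB β a ≤ 1 / (β - 1) :=
  (tsum_inv_pow_succ hβ).symm ▸ (summable_piB hβ a).tsum_le_tsum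
    (piB_term_le (by linarith) a) (summable_geometric_inv_pow_succ hβ)

lemma piB_eq_div (hβ : 1 < β) (a : ℕ → Bool) :
    piB β a = ((if a 0 then 1 else 0) + piB β (shift a)) / β := by
  rw [piB, (summable_piB hβ a).tsum_eq_zero_add, piB, add_div, ← tsum_div_const]
  congr 1
  · simp [div_eq_mul_inv]
  · refine tsum_congr fun i => ?_
    rw [shift, pow_succ _ (i + 1), mul_inv, div_eq_mul_inv, mul_assoc]

lemma mul_piB_sub (hβ : 1 < β) (a : ℕ → Bool) :
    β * piB β a - (if a 0 then 1 else 0) = piB β (shift a) := by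
  have hβ0 : β ≠ 0 := by linarith
  rw [piB_eq_div hβ a]
  field_simp
  ring

lemma digitB_piB (hβ : 1 < β) (a : ℕ → Bool) : digitB β (piB β a) (a 0) = a 0 := by
  have hβ0 : 0 < β := by linarith
  have hrec := piB_eq_div hβ a
  unfold digitB
  cases ha : a 0
  · simp only [ha] at hrec ⊢
    have hle : piB β a ≤ 1 / (β * (β - 1)) :=
      calc piB β a = piB β (shift a) / β := by simpa using hrec
        _ ≤ 1 / (β - 1) / β := by gcongr; exact piB_le hβ _
        _ = 1 / (β * (β - 1)) := by rw [div_div, mul_comm]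
    split_ifs <;> rfl
  · simp only [ha, if_true] at hrec ⊢
    have hge : 1 / β ≤ piB β a := by
      rw [hrec]; gcongr; linarith [piB_nonneg hβ0.le (shift a)]
    rw [if_neg hge.not_gt]
    split_ifs <;> rfl

lemma semiconj_Rmap_shift (hβ : 1 < β) :
    Function.Semiconj (fun a => (a, piB β a)) shift (Rmap β) := fun a => by
  simp only [Rmap, rStep, digitB_piB hβ, mul_piB_sub hβ]

end DigitExpansion

lemma iterate_shift_apply_zero (a : ℕ → Bool) (n : ℕ) : shift^[n] a 0 = a n := by
  induction n generalizing a with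
  | zero => rfl
  | succ n ih => rw [Function.iterate_succ_apply, ih]; rfl

theorem stmt4_general (β : ℝ) (hβ : 1 < β ∧ β < 2) (x : ℝ) (a : ℕ → Bool)
    (ha : x = ∑' n : ℕ, (if a n then (1 : ℝ) else 0) * ((β : ℝ) ^ (n + 1))⁻¹) :
    ∃ ω : ℕ → Bool, ∀ n : ℕ,
      digitB β ((Rmap β)^[n] (ω, x)).2 (((Rmap β)^[n] (ω, x)).1 0) = a n := by
  refine ⟨a, fun n => ?_⟩
  have hx : x = piB β a := ha
  rw [hx, ← (semiconj_Rmap_shift hβ.1).iterate_right n a]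
  simpa only [iterate_shift_apply_zero] using digitB_piB hβ.1 (shift^[n] a)

/-- every β-expansion of a point `x ∈ I_β` is generated by the random
β-transformation for some choice of `ω`. -/
theorem stmt4 (β : ℝ) (hβ : 1 < β ∧ β < 2) (x : ℝ) (hx : x ∈ Ibeta β) (a : ℕ → Bool)
    (ha : x = ∑' n : ℕ, (if a n then (1 : ℝ) else 0) * ((β : ℝ) ^ (n + 1))⁻¹) :
    ∃ ω : ℕ → Bool, ∀ n : ℕ,
      digitB β ((Rmap β)^[n] (ω, x)).2 (((Rmap β)^[n] (ω, x)).1 0) = a n :=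
  stmt4_general β hβ x a ha

end RandomBeta
end

section
/- For every k ≥ 1 one has the telescoping mass identity (2β)^{−k} Σ_{w ∈ {0,1}^k} r(w) = 1 − Σ_{n=0}^{k−1} Σ_{(w,a)} (2β)^{−(n+1)}, where the inner sum runs over pairs (w,a) with w ∈ {0,1}ⁿ, a ∈ {0,1}, and the step from w to wa of type T₁. (The left-hand side is the λ̃-measure of the k-th level ⋃_{w ∈ {0,1}^k} E_w of the tower.) -/
open MeasureTheory Set Filter
open scoped Classical ENNReal

namespace RandomBeta

lemma rW_nil (β : ℝ) : rW β [] = 1 := rfl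

lemma rW_append_singleton (β : ℝ) (w : List Bool) (a : Bool) :
    rW β (w ++ [a]) = β * rW β w - if stepT1 β w a then 1 else 0 := by
  simp only [rW, rItin, List.foldl_append, List.foldl_cons, List.foldl_nil, rStep, stepT1]
  -- the two sides differ only in the `Decidable` instance of the condition
  congr

lemma sum_ofFn_succ {α M : Type*} [Fintype α] [AddCommMonoid M] (k : ℕ) (f : List α → M) :
    ∑ w : Fin (k + 1) → α, f (List.ofFn w) = ∑ w : Fin k → α, ∑ a : α, f (List.ofFn w ++ [a]) := by
  rw [← (Fin.snocEquiv fun _ => α).sum_comp, Fintype.sum_prod_type_right]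
  simp only [Fin.snocEquiv_apply, List.ofFn_succ', Fin.snoc_last, Fin.snoc_castSucc,
    List.concat_eq_append]

lemma sum_rW_succ (β : ℝ) (k : ℕ) :
    ∑ w : Fin (k + 1) → Bool, rW β (List.ofFn w)
      = 2 * β * ∑ w : Fin k → Bool, rW β (List.ofFn w)
        - ∑ w : Fin k → Bool, ∑ a : Bool, if stepT1 β (List.ofFn w) a then 1 else 0 := by
  rw [sum_ofFn_succ, Finset.mul_sum, ← Finset.sum_sub_distrib]
  refine Finset.sum_congr rfl fun w _ => ?_
  simp only [rW_append_singleton, Fintype.sum_bool]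
  ring

theorem stmt6_general (β : ℝ) (hβ : 1 < β ∧ β < 2) (k : ℕ) :
    ((2 * β) ^ k)⁻¹ * ∑ w : Fin k → Bool, rW β (List.ofFn w)
      = 1 - ∑ n ∈ Finset.range k, ∑ w : Fin n → Bool, ∑ a : Bool,
          (if stepT1 β (List.ofFn w) a then ((2 * β) ^ (n + 1))⁻¹ else 0) := by
  have hβ0 : β ≠ 0 := by linarith
  induction k with
  | zero => simp [rW_nil]
  | succ k ih =>
    have hT1 : ∑ w : Fin k → Bool, ∑ a : Bool,
          (if stepT1 β (List.ofFn w) a then ((2 * β) ^ (k + 1))⁻¹ else 0)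
        = ((2 * β) ^ (k + 1))⁻¹ * ∑ w : Fin k → Bool, ∑ a : Bool,
          (if stepT1 β (List.ofFn w) a then 1 else 0) := by
      simp only [Finset.mul_sum, mul_ite, mul_one, mul_zero]
    rw [Finset.sum_range_succ, hT1, ← sub_sub, ← ih, sum_rW_succ, pow_succ]
    field_simp

/-- the telescoping mass identity
`(2β)^{-k} Σ_{w ∈ {0,1}^k} r(w) = 1 - Σ_{n<k} Σ_{(w,a) : T₁-step} (2β)^{-(n+1)}`. -/
theorem stmt6 (β : ℝ) (hβ : 1 < β ∧ β < 2) (k : ℕ) (hk : 1 ≤ k) :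
    ((2 * β) ^ k)⁻¹ * ∑ w : Fin k → Bool, rW β (List.ofFn w)
      = 1 - ∑ n ∈ Finset.range k, ∑ w : Fin n → Bool, ∑ a : Bool,
          (if stepT1 β (List.ofFn w) a then ((2 * β) ^ (n + 1))⁻¹ else 0) :=
  stmt6_general β hβ k

end RandomBeta
end

section
/- The total mass of the strips returned to the base of the tower equals one: Σ_{n=0}^∞ Σ_{(w,a)} (2β)^{−(n+1)} = 1, where the inner sum runs over pairs (w,a) with w ∈ {0,1}ⁿ, a ∈ {0,1}, and the step from w to wa of type T₁. -/
open MeasureTheory Set Filter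
open scoped Classical ENNReal

theorem Fintype.sum_ofFn_succ_eq_sum_append {α M : Type*} [Fintype α] [AddCommMonoid M]
    (n : ℕ) (g : List α → M) :
    ∑ f : Fin (n + 1) → α, g (List.ofFn f) = ∑ f : Fin n → α, ∑ a : α, g (List.ofFn f ++ [a]) := by
  rw [← (Fin.snocEquiv fun _ => α).sum_comp, Fintype.sum_prod_type, Finset.sum_comm]
  refine Finset.sum_congr rfl fun f _ => Finset.sum_congr rfl fun a _ => ?_
  simp only [Fin.snocEquiv, Equiv.coe_fn_mk]
  rw [List.ofFn_succ']
  simp [Fin.snoc_castSucc]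

namespace RandomBeta

section Itinerary

variable {β : ℝ}

theorem rStep_mem_Ibeta (hβ : 1 < β) (hβ₂ : β ≤ 2) {x : ℝ} (hx : x ∈ Ibeta β) (a : Bool) :
    rStep β x a ∈ Ibeta β := by
  obtain ⟨hx0, hxc⟩ := hx
  have hβ0 : 0 < β := by linarith
  have hβ1 : 0 < β - 1 := by linarith
  have hL : x < 1 / β ↔ β * x < 1 := by rw [lt_div_iff₀ hβ0, mul_comm]
  have hS : x ≤ 1 / (β * (β - 1)) ↔ β * x ≤ 1 / (β - 1) := by
    rw [le_div_iff₀ (by positivity), le_div_iff₀ hβ1]; ring_nf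
  have hc : 1 ≤ 1 / (β - 1) := by rw [le_div_iff₀ hβ1]; linarith
  have hR : β * x ≤ 1 / (β - 1) + 1 := by
    have : β * (1 / (β - 1)) = 1 / (β - 1) + 1 := by field_simp; ring
    nlinarith
  unfold rStep digitB
  split_ifs with h₁ h₂ h₃ <;> rw [hL] at * <;> try rw [hS] at *
  all_goals constructor <;> simp_all <;> nlinarith

theorem rItin_mem_Ibeta (hβ : 1 < β) (hβ₂ : β ≤ 2) (w : List Bool) {x : ℝ} (hx : x ∈ Ibeta β) :
    rItin β x w ∈ Ibeta β := by
  induction w generalizing x with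
  | nil => exact hx
  | cons a w ih => exact ih (rStep_mem_Ibeta hβ hβ₂ hx a)

theorem rItin_append_singleton (x : ℝ) (w : List Bool) (a : Bool) :
    rItin β x (w ++ [a]) = rStep β (rItin β x w) a := by
  simp [rItin, List.foldl_append]

noncomputable def levelSum (β x : ℝ) (n : ℕ) : ℝ := ∑ w : Fin n → Bool, rItin β x (List.ofFn w)

theorem levelSum_zero (x : ℝ) : levelSum β x 0 = x := by
  simp [levelSum, rItin]

theorem levelSum_succ (x : ℝ) (n : ℕ) :
    levelSum β x (n + 1) = ∑ w : Fin n → Bool, ∑ a : Bool, rStep β (rItin β x (List.ofFn w)) a := by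
  simp only [levelSum, Fintype.sum_ofFn_succ_eq_sum_append, rItin_append_singleton]

theorem levelSum_nonneg (hβ : 1 < β) (hβ₂ : β ≤ 2) {x : ℝ} (hx : x ∈ Ibeta β) (n : ℕ) :
    0 ≤ levelSum β x n :=
  Finset.sum_nonneg fun _ _ => (rItin_mem_Ibeta hβ hβ₂ _ hx).1

theorem levelSum_le (hβ : 1 < β) (hβ₂ : β ≤ 2) {x : ℝ} (hx : x ∈ Ibeta β) (n : ℕ) :
    levelSum β x n ≤ 2 ^ n * (1 / (β - 1)) := by
  calc levelSum β x n ≤ ∑ _w : Fin n → Bool, 1 / (β - 1) :=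
        Finset.sum_le_sum fun _ _ => (rItin_mem_Ibeta hβ hβ₂ _ hx).2
    _ = 2 ^ n * (1 / (β - 1)) := by simp

noncomputable def stepMass (β x : ℝ) (n : ℕ) : ℝ :=
  ∑ w : Fin n → Bool, ∑ a : Bool,
    if digitB β (rItin β x (List.ofFn w)) a then ((2 * β) ^ (n + 1))⁻¹ else 0

theorem stepMass_nonneg (hβ : 0 < β) (x : ℝ) (n : ℕ) : 0 ≤ stepMass β x n :=
  Finset.sum_nonneg fun _ _ => Finset.sum_nonneg fun _ _ => by positivity

theorem stepMass_eq_sub (hβ : 0 < β) (x : ℝ) (n : ℕ) :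
    stepMass β x n = levelSum β x n / (2 * β) ^ n - levelSum β x (n + 1) / (2 * β) ^ (n + 1) := by
  have hstep : ∀ y : ℝ, ∀ a : Bool, (if digitB β y a then ((2 * β) ^ (n + 1))⁻¹ else 0) =
      (β * y - rStep β y a) / (2 * β) ^ (n + 1) := by
    intro y a
    cases h : digitB β y a <;> simp [rStep, h, div_eq_mul_inv]
  rw [levelSum_succ]
  simp only [stepMass, levelSum, hstep, Fintype.sum_bool, Finset.sum_div, ← Finset.sum_sub_distrib]
  refine Finset.sum_congr rfl fun w _ => ?_
  field_simp
  ring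

theorem sum_range_stepMass (hβ : 0 < β) (x : ℝ) (N : ℕ) :
    ∑ n ∈ Finset.range N, stepMass β x n = x - levelSum β x N / (2 * β) ^ N := by
  simp only [stepMass_eq_sub hβ, Finset.sum_range_sub', pow_zero, div_one, levelSum_zero]

theorem tendsto_levelSum_div (hβ : 1 < β) (hβ₂ : β ≤ 2) {x : ℝ} (hx : x ∈ Ibeta β) :
    Tendsto (fun n => levelSum β x n / (2 * β) ^ n) atTop (nhds 0) := by
  have hβ0 : 0 < β := by linarith
  have hbound : ∀ n, levelSum β x n / (2 * β) ^ n ≤ 1 / (β - 1) * β⁻¹ ^ n := fun n => by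
    calc levelSum β x n / (2 * β) ^ n ≤ 2 ^ n * (1 / (β - 1)) / (2 * β) ^ n := by
          gcongr; exact levelSum_le hβ hβ₂ hx n
      _ = 1 / (β - 1) * β⁻¹ ^ n := by rw [inv_pow, mul_pow]; field_simp
  refine squeeze_zero (fun n => div_nonneg (levelSum_nonneg hβ hβ₂ hx n) (by positivity)) hbound ?_
  simpa using (tendsto_pow_atTop_nhds_zero_of_lt_one (inv_nonneg.2 hβ0.le)
    (inv_lt_one_of_one_lt₀ hβ)).const_mul (1 / (β - 1))

theorem hasSum_stepMass (hβ : 1 < β) (hβ₂ : β ≤ 2) {x : ℝ} (hx : x ∈ Ibeta β) :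
    HasSum (stepMass β x) x := by
  have hβ0 : 0 < β := by linarith
  rw [hasSum_iff_tendsto_nat_of_nonneg (stepMass_nonneg hβ0 x)]
  simp only [sum_range_stepMass hβ0]
  simpa using (tendsto_levelSum_div hβ hβ₂ hx).const_sub x

end Itinerary

/-- the total mass of the strips returned to the base equals one:
`Σ_{n≥0} Σ_{(w,a) : w ∈ {0,1}ⁿ, step w→wa of type T₁} (2β)^{-(n+1)} = 1`. -/
theorem stmt7 (β : ℝ) (hβ : 1 < β ∧ β < 2) :
    ∑' n : ℕ, ∑ w : Fin n → Bool, ∑ a : Bool,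
      (if stepT1 β (List.ofFn w) a then ((2 * β) ^ (n + 1))⁻¹ else 0) = 1 := by
  obtain ⟨hβ1, hβ2⟩ := hβ
  have h_one_mem : (1 : ℝ) ∈ Ibeta β :=
    ⟨zero_le_one, by rw [le_div_iff₀ (by linarith)]; linarith⟩
  rw [← (hasSum_stepMass hβ1 hβ2.le h_one_mem).tsum_eq]
  refine tsum_congr fun n => Finset.sum_congr rfl fun w _ => Finset.sum_congr rfl fun a _ => ?_
  exact if_congr Iff.rfl rfl rfl

end RandomBeta
end

section
/- For every word w ∈ {0,1}ⁿ with r(w) ∈ R, the image of the exceptional set F_w = {(ω′,x,y) ∈ E_w : ω′₁ = 0, x ∈ S} under ψ is exactly the part of the next sublevel with small x-coordinate: ψ(F_w) = E_{w0} ∩ (Ω × [0, 1/(β−1) − 1] × ℝ). -/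
open MeasureTheory Set Filter
open scoped Classical ENNReal

namespace RandomBeta

/-!
On `F_w` the step `w → w0` is of type `T₁` and `x ∈ S`, so `ψ` acts there as the product map
`(σ, x ↦ βx - 1, y ↦ y/(2β) + C₁(w0))`, and `F_w` itself is the product
`[0] × S × [v(w), v(w) + (2β)^(-n))`. Hence `ψ(F_w)` is the product of the images:
`σ` maps the cylinder `[0]` onto `Ω`, `x ↦ βx - 1` maps `S` onto `[0, 1/(β-1) - 1]`, and the
affine `y`-map carries the band of `w` onto the band of `w0`. Since
`r(w0) = βr(w) - 1 > 1/(β-1) - 1`, the right-hand side is the same product.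
-/

theorem lVal_lt_two_pow (w : List Bool) : lVal w < 2 ^ w.length := by
  induction w with
  | nil => simp [lVal]
  | cons a t ih => cases a <;> simp [lVal, pow_succ] <;> omega

theorem eq_of_length_eq_of_lVal_eq {w w' : List Bool} (hlen : w.length = w'.length)
    (h : lVal w = lVal w') : w = w' := by
  induction w generalizing w' with
  | nil => exact (List.length_eq_zero_iff.mp hlen.symm).symm
  | cons a t ih =>
    cases w' with
    | nil => simp at hlen
    | cons b s =>
      have hab : a = b := by cases a <;> cases b <;> simp [lVal] at h ⊢ <;> omega
      subst hab
      rw [ih (by simpa using hlen) (by cases a <;> simp [lVal] at h <;> omega)]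

def vBand (β : ℝ) (w : List Bool) : Set ℝ :=
  Ico (vVal β w) (vVal β w + ((2 * β) ^ w.length)⁻¹)

theorem Eset_eq_prod (β : ℝ) (w : List Bool) :
    Eset β w = univ ×ˢ (Icc 0 (rW β w) ×ˢ vBand β w) := by
  ext p
  simp [Eset, vBand]

section vBand

variable {β : ℝ} (hβ : 0 < β)
include hβ

theorem vBand_le_geom_sum (w : List Bool) :
    vVal β w + ((2 * β) ^ w.length)⁻¹ ≤ ∑ k ∈ Finset.range (w.length + 1), (β ^ k)⁻¹ := by
  have hl : (lVal w : ℝ) + 1 ≤ 2 ^ w.length := by exact_mod_cast lVal_lt_two_pow w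
  have key : (lVal w : ℝ) / (2 * β) ^ w.length + ((2 * β) ^ w.length)⁻¹ ≤ (β ^ w.length)⁻¹ := by
    rw [inv_eq_one_div, ← add_div, mul_pow, div_le_iff₀ (by positivity)]
    field_simp
    exact hl
  rw [vVal, Finset.sum_range_succ]
  linarith

theorem vBand_le_of_length_lt {w w' : List Bool} (h : w.length < w'.length) :
    vVal β w + ((2 * β) ^ w.length)⁻¹ ≤ vVal β w' :=
  calc vVal β w + ((2 * β) ^ w.length)⁻¹
      ≤ ∑ k ∈ Finset.range (w.length + 1), (β ^ k)⁻¹ := vBand_le_geom_sum hβ w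
    _ ≤ ∑ k ∈ Finset.range w'.length, (β ^ k)⁻¹ :=
        Finset.sum_le_sum_of_subset_of_nonneg (Finset.range_subset_range.mpr h)
          fun _ _ _ => by positivity
    _ ≤ vVal β w' := le_add_of_nonneg_right (by positivity)

theorem vBand_le_of_lVal_lt {w w' : List Bool} (hlen : w.length = w'.length)
    (h : lVal w < lVal w') : vVal β w + ((2 * β) ^ w.length)⁻¹ ≤ vVal β w' := by
  have hl : (lVal w : ℝ) + 1 ≤ lVal w' := by exact_mod_cast h
  have key : (lVal w : ℝ) / (2 * β) ^ w.length + ((2 * β) ^ w.length)⁻¹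
      ≤ (lVal w' : ℝ) / (2 * β) ^ w.length := by
    rw [inv_eq_one_div, ← add_div]
    gcongr
  rw [vVal, vVal, ← hlen]
  linarith

/-- The bands are ordered first by length, then by `l(w)`; this makes the word chosen in
the definition of `psi` unique. -/
theorem eq_of_mem_vBand {w w' : List Bool} {y : ℝ} (h : y ∈ vBand β w) (h' : y ∈ vBand β w') :
    w = w' := by
  obtain ⟨h1, h2⟩ := h
  obtain ⟨h1', h2'⟩ := h'
  rcases Nat.lt_trichotomy w.length w'.length with hl | hl | hl
  · linarith [vBand_le_of_length_lt hβ hl]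
  · rcases Nat.lt_trichotomy (lVal w) (lVal w') with hv | hv | hv
    · linarith [vBand_le_of_lVal_lt hβ hl hv]
    · exact eq_of_length_eq_of_lVal_eq hl hv
    · linarith [vBand_le_of_lVal_lt hβ hl.symm hv]
  · linarith [vBand_le_of_length_lt hβ hl]

theorem psi_eq_psiAux {w : List Bool} {p : (ℕ → Bool) × ℝ × ℝ} (hp : p ∈ Eset β w) :
    psi β p = psiAux β w p := by
  have hex : ∃ u, p ∈ Eset β u := ⟨w, hp⟩
  rw [psi, dif_pos hex, eq_of_mem_vBand hβ hex.choose_spec.2 hp.2]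

theorem image_vBand (w : List Bool) (a : Bool) :
    ((2 * β)⁻¹ * · + C1 β w a) '' vBand β w = vBand β (w ++ [a]) := by
  rw [vBand, image_affine_Ico (by positivity), vBand, C1, List.length_append,
    List.length_singleton, pow_succ]
  congr 1 <;> field_simp <;> ring

end vBand

theorem image_shift_setOf_apply_zero (b : Bool) : shift '' {ω | ω 0 = b} = univ :=
  eq_univ_of_forall fun ω => ⟨fun n => n.casesOn b ω, by rfl, rfl⟩

theorem image_Sset {β : ℝ} (hβ : 1 < β) :
    (β * · + -1) '' Sset β = Icc 0 (1 / (β - 1) - 1) := by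
  have hβ0 : 0 < β := by linarith
  rw [Sset, image_affine_Icc' hβ0]
  congr 1
  · field_simp; ring
  · field_simp; ring

theorem rW_append (β : ℝ) (w : List Bool) (a : Bool) :
    rW β (w ++ [a]) = rStep β (rW β w) a := by
  simp [rW, rItin, List.foldl_append]

theorem digitB_of_mem_Rset {β x : ℝ} (hβ : 1 < β ∧ β < 2) (hx : x ∈ Rset β) (a : Bool) :
    digitB β x a = true := by
  have : 1 / β ≤ 1 / (β * (β - 1)) := one_div_le_one_div_of_le (by nlinarith) (by nlinarith)
  rw [digitB, if_neg (not_lt.mpr (by linarith [hx.1])), if_neg (not_le.mpr hx.1)]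

section Rset

variable {β : ℝ} (hβ : 1 < β ∧ β < 2) {w : List Bool} (hw : rW β w ∈ Rset β)
include hβ hw

theorem Fset_eq_prod : Fset β w = {ω | ω 0 = false} ×ˢ (Sset β ×ˢ vBand β w) := by
  have hSr : Sset β ⊆ Icc 0 (rW β w) :=
    Icc_subset_Icc (one_div_nonneg.mpr (by linarith [hβ.1])) hw.1.le
  ext p
  simp only [Fset, Eset_eq_prod, mem_prod, mem_ofPred_eq, mem_univ, true_and]
  exact ⟨fun ⟨⟨_, hv⟩, h0, hS, _⟩ => ⟨h0, hS, hv⟩, fun ⟨h0, hS, hv⟩ => ⟨⟨hSr hS, hv⟩, h0, hS, hw⟩⟩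

theorem psi_eqOn_Fset :
    EqOn (psi β) (Prod.map shift (Prod.map (β * · + -1) ((2 * β)⁻¹ * · + C1 β w false)))
      (Fset β w) := by
  rintro p ⟨hp, h0, hS, -⟩
  rw [psi_eq_psiAux (by linarith [hβ.1]) hp, psiAux, h0, digitB_of_mem_Rset hβ hw, if_pos rfl,
    if_neg (not_lt.mpr hS.1)]
  simp only [Prod.map, sub_eq_add_neg, div_eq_inv_mul]

theorem Eset_append_false_inter :
    Eset β (w ++ [false]) ∩ {p | p.2.1 ∈ Icc 0 (1 / (β - 1) - 1)}
      = univ ×ˢ (Icc 0 (1 / (β - 1) - 1) ×ˢ vBand β (w ++ [false])) := by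
  have hβ0 : 0 < β := by linarith [hβ.1]
  have hr : 1 / (β - 1) - 1 ≤ rW β (w ++ [false]) := by
    rw [rW_append, rStep, digitB_of_mem_Rset hβ hw, if_pos rfl]
    have h : β * (1 / (β * (β - 1))) = 1 / (β - 1) := by field_simp
    linarith [mul_lt_mul_of_pos_left hw.1 hβ0]
  ext p
  simp only [Eset_eq_prod, mem_inter_iff, mem_prod, mem_ofPred_eq, mem_univ, true_and]
  exact ⟨fun ⟨⟨_, hv⟩, hx⟩ => ⟨hx, hv⟩, fun ⟨hx, hv⟩ => ⟨⟨⟨hx.1, hx.2.trans hr⟩, hv⟩, hx⟩⟩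

end Rset

/-- for `r(w) ∈ R`, the image of the exceptional set
`F_w = {(ω',x,y) ∈ E_w : ω'₁ = 0, x ∈ S}` under `ψ` is exactly
`E_{w0} ∩ (Ω × [0, 1/(β-1) - 1] × ℝ)`. -/
theorem stmt11 (β : ℝ) (hβ : 1 < β ∧ β < 2) (w : List Bool) (hw : rW β w ∈ Rset β) :
    psi β '' Fset β w
      = Eset β (w ++ [false]) ∩ {p | p.2.1 ∈ Set.Icc (0 : ℝ) (1 / (β - 1) - 1)} := by
  rw [(psi_eqOn_Fset hβ hw).image_eq, Fset_eq_prod hβ hw, prodMap_image_prod, prodMap_image_prod,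
    image_shift_setOf_apply_zero, image_Sset hβ.1, image_vBand (by linarith [hβ.1]),
    Eset_append_false_inter hβ hw]

end RandomBeta
end

section
/- (Parry) Let β > 1 and let T : [0,1] → [0,1] be T(x) = βx − ⌊βx⌋. Then the function d(x) = Σ_{n=0}^∞ β^{−n} χ_{[0, Tⁿ(1)]}(x) satisfies 0 < ∫_0^1 d dλ < ∞, and the probability measure on [0,1] with density d / ∫_0^1 d dλ with respect to Lebesgue measure is T-invariant. -/
/-!
Write `tₙ = Tⁿ(1)` and `aₙ = ⌊β tₙ⌋`, so that `tₙ₊₁ = β tₙ - aₙ` and `∑ aₙ β^{-(n+1)} = 1`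
(the greedy expansion of `1`). For `t ≥ 0`, the set `T⁻¹A ∩ [0, t)` consists of `⌊βt⌋` full
branches over `A ∩ [0, 1)` and one partial branch over `A ∩ [0, T t)`, each of Lebesgue measure
`β⁻¹` times that of its image. Hence, with weights `β^{-n}`, the full branches of all the
`T⁻¹A ∩ [0, tₙ)` together contribute `λ(A ∩ [0, 1)) ∑ aₙ β^{-(n+1)} = λ(A ∩ [0, 1))`, the `n = 0`
term of `∫_A d`, while the partial branches produce the terms `n ≥ 1`.
-/

open MeasureTheory Set Filter
open scoped Classical ENNReal

namespace RandomBeta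

/-- The greedy β-transformation `T(x) = βx - ⌊βx⌋`. -/
noncomputable def Tgreedy (β x : ℝ) : ℝ := β * x - (⌊β * x⌋ : ℝ)

/-- Parry's function `d(x) = Σ_n β^{-n} χ_{[0, Tⁿ(1)]}(x)`. -/
noncomputable def dParry (β x : ℝ) : ℝ :=
  ∑' n : ℕ, ((β : ℝ) ^ n)⁻¹ * (Set.Icc (0 : ℝ) ((Tgreedy β)^[n] 1)).indicator 1 x


section Parry

open Function

variable {β : ℝ}

lemma Tgreedy_mem_Ico (β x : ℝ) : Tgreedy β x ∈ Ico (0 : ℝ) 1 :=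
  ⟨sub_nonneg.2 (Int.floor_le _), sub_lt_iff_lt_add'.2 (Int.lt_floor_add_one _)⟩

lemma measurable_Tgreedy (β : ℝ) : Measurable (Tgreedy β) := by
  unfold Tgreedy
  fun_prop

lemma iterate_Tgreedy_one_mem_Icc (β : ℝ) (n : ℕ) : (Tgreedy β)^[n] 1 ∈ Icc (0 : ℝ) 1 := by
  cases n with
  | zero => simp
  | succ n =>
    rw [Function.iterate_succ_apply']
    exact Ico_subset_Icc_self (Tgreedy_mem_Ico β _)

lemma Tgreedy_eq_sub_natFloor {x : ℝ} (hx : 0 ≤ β * x) : Tgreedy β x = β * x - ⌊β * x⌋₊ := by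
  rw [Tgreedy, ← Int.natCast_floor_eq_floor hx, Int.cast_natCast]

lemma natFloor_eq_of_sub_mem_Ico {a : ℝ} {k : ℕ} (h : a - k ∈ Ico (0 : ℝ) 1) : ⌊a⌋₊ = k :=
  (Nat.floor_eq_iff (by linarith [h.1, k.cast_nonneg (α := ℝ)])).2 ⟨by linarith [h.1], by linarith [h.2]⟩

lemma volume_preimage_mul_sub (hβ : 0 < β) (k : ℝ) (S : Set ℝ) :
    volume ((fun x => β * x - k) ⁻¹' S) = ENNReal.ofReal β⁻¹ * volume S := by
  have hcomp : (fun x : ℝ => β * x - k) = (· + -k) ∘ (β * ·) := by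
    ext x
    simp [sub_eq_add_neg]
  rw [hcomp, preimage_comp, Real.volume_preimage_mul_left hβ.ne', measure_preimage_add_right,
    abs_of_pos (inv_pos.2 hβ)]

/-- On the `k`-th branch `[k/β, (k+1)/β)` the map is `x ↦ βx - k`; intersecting with `[0, t)`
cuts its image down to `[0, min 1 (βt - k))`, which is empty for `k > βt`. -/
lemma preimage_Tgreedy_inter_Ico (hβ : 0 < β) (A : Set ℝ) (t : ℝ) :
    Tgreedy β ⁻¹' A ∩ Ico 0 t
      = ⋃ k : ℕ, (fun x => β * x - k) ⁻¹' (A ∩ Ico 0 (min 1 (β * t - k))) := by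
  ext x
  simp only [mem_inter_iff, mem_preimage, mem_Ico, mem_iUnion, lt_min_iff]
  constructor
  · rintro ⟨hxA, hx0, hxt⟩
    have hβx : 0 ≤ β * x := by positivity
    refine ⟨⌊β * x⌋₊, ?_, ?_, ?_, ?_⟩
    · rwa [← Tgreedy_eq_sub_natFloor hβx]
    · linarith [Nat.floor_le hβx]
    · linarith [Nat.lt_floor_add_one (β * x)]
    · linarith [mul_lt_mul_of_pos_left hxt hβ]
  · rintro ⟨k, hxA, hk0, hk1, hkt⟩
    have hβx : 0 ≤ β * x := by linarith [k.cast_nonneg (α := ℝ)]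
    refine ⟨?_, nonneg_of_mul_nonneg_right hβx hβ, (mul_lt_mul_iff_of_pos_left hβ).1 (by linarith)⟩
    rwa [Tgreedy_eq_sub_natFloor hβx, natFloor_eq_of_sub_mem_Ico ⟨hk0, hk1⟩]

lemma tsum_measure_inter_Ico_min_one_sub (μ : Measure ℝ) (A : Set ℝ) (s : ℝ) :
    ∑' k : ℕ, μ (A ∩ Ico 0 (min 1 (s - k)))
      = ⌊s⌋₊ * μ (A ∩ Ico 0 1) + μ (A ∩ Ico 0 (s - ⌊s⌋₊)) := by
  have hs := Nat.lt_floor_add_one s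
  rw [tsum_eq_sum (s := Finset.range (⌊s⌋₊ + 1)) fun k hk => ?_, Finset.sum_range_succ]
  · have hfull : ∀ k ∈ Finset.range ⌊s⌋₊, μ (A ∩ Ico 0 (min 1 (s - k))) = μ (A ∩ Ico 0 1) := by
      intro k hk
      have hks : ((k + 1 : ℕ) : ℝ) ≤ s :=
        (Nat.le_floor_iff' k.succ_ne_zero).1 (Finset.mem_range.1 hk)
      push_cast at hks
      rw [min_eq_left (by linarith)]
    rw [Finset.sum_congr rfl hfull, Finset.sum_const, Finset.card_range, nsmul_eq_mul,
      min_eq_right (by linarith)]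
  · have hks : s - k < 0 := by
      have : ((⌊s⌋₊ + 1 : ℕ) : ℝ) ≤ k := by
        exact_mod_cast not_lt.1 (Finset.mem_range.not.1 hk)
      push_cast at this
      linarith
    rw [Ico_eq_empty (not_lt.2 ((min_le_right _ _).trans hks.le)), inter_empty, measure_empty]

lemma volume_preimage_Tgreedy_inter_Ico (hβ : 0 < β) {A : Set ℝ} (hA : MeasurableSet A)
    {t : ℝ} (ht : 0 ≤ t) :
    volume (Tgreedy β ⁻¹' A ∩ Ico 0 t) = ENNReal.ofReal β⁻¹ *
      (⌊β * t⌋₊ * volume (A ∩ Ico 0 1) + volume (A ∩ Ico 0 (Tgreedy β t))) := by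
  have hdisj : Pairwise (Disjoint on
      fun k : ℕ => (fun x => β * x - k) ⁻¹' (A ∩ Ico 0 (min 1 (β * t - k)))) := by
    refine fun i j hij => disjoint_left.2 fun x hi hj => hij ?_
    rw [← natFloor_eq_of_sub_mem_Ico (Ico_subset_Ico_right (min_le_left _ _) hi.2),
      natFloor_eq_of_sub_mem_Ico (Ico_subset_Ico_right (min_le_left _ _) hj.2)]
  have hmeas : ∀ k : ℕ, MeasurableSet ((fun x => β * x - k) ⁻¹' (A ∩ Ico 0 (min 1 (β * t - k)))) :=
    fun k => (by fun_prop : Measurable fun x => β * x - k) (hA.inter measurableSet_Ico)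
  rw [preimage_Tgreedy_inter_Ico hβ, measure_iUnion hdisj hmeas]
  simp only [volume_preimage_mul_sub hβ]
  rw [ENNReal.tsum_mul_left, tsum_measure_inter_Ico_min_one_sub,
    Tgreedy_eq_sub_natFloor (by positivity)]

lemma dParry_term_nonneg (hβ : 0 < β) (n : ℕ) (x : ℝ) :
    0 ≤ ((β : ℝ) ^ n)⁻¹ * (Icc (0 : ℝ) ((Tgreedy β)^[n] 1)).indicator 1 x := by
  have : 0 ≤ (Icc (0 : ℝ) ((Tgreedy β)^[n] 1)).indicator (1 : ℝ → ℝ) x :=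
    indicator_nonneg (fun _ _ => zero_le_one) x
  positivity

lemma dParry_term_le (hβ : 0 < β) (n : ℕ) (x : ℝ) :
    ((β : ℝ) ^ n)⁻¹ * (Icc (0 : ℝ) ((Tgreedy β)^[n] 1)).indicator 1 x ≤ β⁻¹ ^ n := by
  rw [← inv_pow]
  exact mul_le_of_le_one_right (by positivity)
    (indicator_apply_le' (fun _ => le_rfl) (fun _ => zero_le_one))

lemma summable_inv_pow (hβ : 1 < β) : Summable fun n : ℕ => β⁻¹ ^ n :=
  summable_geometric_of_lt_one (by positivity) (inv_lt_one_of_one_lt₀ hβ)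

lemma summable_dParry_term (hβ : 1 < β) (x : ℝ) :
    Summable fun n : ℕ => ((β : ℝ) ^ n)⁻¹ * (Icc (0 : ℝ) ((Tgreedy β)^[n] 1)).indicator 1 x :=
  (summable_inv_pow hβ).of_nonneg_of_le (dParry_term_nonneg (by positivity) · x)
    (dParry_term_le (by positivity) · x)

lemma dParry_nonneg (hβ : 0 < β) (x : ℝ) : 0 ≤ dParry β x :=
  tsum_nonneg (dParry_term_nonneg hβ · x)

lemma dParry_le (hβ : 1 < β) (x : ℝ) : dParry β x ≤ (1 - β⁻¹)⁻¹ := by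
  rw [← tsum_geometric_of_lt_one (by positivity) (inv_lt_one_of_one_lt₀ hβ)]
  exact (summable_dParry_term hβ x).tsum_le_tsum (dParry_term_le (by positivity) · x)
    (summable_inv_pow hβ)

lemma one_le_dParry (hβ : 1 < β) {x : ℝ} (hx : x ∈ Icc (0 : ℝ) 1) : 1 ≤ dParry β x := by
  have h := (summable_dParry_term hβ x).le_tsum 0 fun n _ => dParry_term_nonneg (by positivity) n x
  rwa [pow_zero, inv_one, one_mul, Function.iterate_zero_apply, indicator_of_mem hx] at h

lemma measurable_dParry (β : ℝ) : Measurable (dParry β) :=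
  Measurable.tsum fun _ => (measurable_const.indicator measurableSet_Icc).const_mul _

lemma integrableOn_dParry (hβ : 1 < β) : IntegrableOn (dParry β) (Icc (0 : ℝ) 1) :=
  Measure.integrableOn_of_bounded (by simp) (measurable_dParry β).aestronglyMeasurable
    (M := (1 - β⁻¹)⁻¹) <| ae_of_all _ fun x => by
      rw [Real.norm_of_nonneg (dParry_nonneg (by positivity) x)]
      exact dParry_le hβ x

lemma integral_dParry_pos (hβ : 1 < β) : 0 < ∫ x in Icc (0 : ℝ) 1, dParry β x := by
  have h := setIntegral_ge_of_const_le measurableSet_Icc (by simp) (fun x hx => one_le_dParry hβ hx)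
    (integrableOn_dParry hβ)
  simp only [Real.volume_real_Icc, sub_zero, max_eq_left zero_le_one, smul_eq_mul, mul_one] at h
  linarith

lemma ofReal_dParry (hβ : 1 < β) (x : ℝ) :
    ENNReal.ofReal (dParry β x)
      = ∑' n : ℕ, (Icc (0 : ℝ) ((Tgreedy β)^[n] 1)).indicator (fun _ => ENNReal.ofReal β⁻¹ ^ n) x := by
  rw [dParry, ENNReal.ofReal_tsum_of_nonneg (dParry_term_nonneg (by positivity) · x)
    (summable_dParry_term hβ x)]
  refine tsum_congr fun n => ?_
  by_cases hx : x ∈ Icc (0 : ℝ) ((Tgreedy β)^[n] 1)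
  · rw [indicator_of_mem hx, indicator_of_mem hx, Pi.one_apply, mul_one, ← inv_pow,
      ENNReal.ofReal_pow (by positivity)]
  · rw [indicator_of_notMem hx, indicator_of_notMem hx, mul_zero, ENNReal.ofReal_zero]

lemma lintegral_ofReal_dParry (hβ : 1 < β) (B : Set ℝ) :
    ∫⁻ x in B ∩ Icc 0 1, ENNReal.ofReal (dParry β x)
      = ∑' n : ℕ, ENNReal.ofReal β⁻¹ ^ n * volume (B ∩ Ico 0 ((Tgreedy β)^[n] 1)) := by
  simp only [ofReal_dParry hβ]
  rw [lintegral_tsum fun n => (measurable_const.indicator measurableSet_Icc).aemeasurable]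
  refine tsum_congr fun n => ?_
  have hsub : Icc 0 ((Tgreedy β)^[n] 1) ∩ (B ∩ Icc 0 1) = B ∩ Icc 0 ((Tgreedy β)^[n] 1) := by
    rw [inter_comm, inter_assoc, inter_eq_right.2
      (Icc_subset_Icc_right (iterate_Tgreedy_one_mem_Icc β n).2)]
  rw [lintegral_indicator_const measurableSet_Icc, Measure.restrict_apply measurableSet_Icc, hsub,
    measure_congr (ae_eq_set_inter (ae_eq_refl B) Ico_ae_eq_Icc).symm]

lemma iterate_Tgreedy_one_succ (hβ : 0 < β) (n : ℕ) :
    (Tgreedy β)^[n + 1] 1 = β * (Tgreedy β)^[n] 1 - ⌊β * (Tgreedy β)^[n] 1⌋₊ := by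
  rw [Function.iterate_succ_apply',
    Tgreedy_eq_sub_natFloor (mul_nonneg hβ.le (iterate_Tgreedy_one_mem_Icc β n).1)]

lemma sum_range_natFloor_mul_inv_pow (hβ : 0 < β) (N : ℕ) :
    ∑ n ∈ Finset.range N, (⌊β * (Tgreedy β)^[n] 1⌋₊ : ℝ) * β⁻¹ ^ (n + 1)
      = 1 - (Tgreedy β)^[N] 1 * β⁻¹ ^ N := by
  induction N with
  | zero => simp
  | succ N ih =>
    rw [Finset.sum_range_succ, ih, iterate_Tgreedy_one_succ hβ, pow_succ]
    field_simp
    ring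

lemma hasSum_natFloor_mul_inv_pow (hβ : 1 < β) :
    HasSum (fun n : ℕ => (⌊β * (Tgreedy β)^[n] 1⌋₊ : ℝ) * β⁻¹ ^ (n + 1)) 1 := by
  have hβ0 : 0 < β := by linarith
  rw [hasSum_iff_tendsto_nat_of_nonneg (fun n => by positivity)]
  simp only [sum_range_natFloor_mul_inv_pow hβ0]
  have hrem : Tendsto (fun N : ℕ => (Tgreedy β)^[N] 1 * β⁻¹ ^ N) atTop (nhds 0) :=
    squeeze_zero (fun N => mul_nonneg (iterate_Tgreedy_one_mem_Icc β N).1 (by positivity))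
      (fun N => mul_le_of_le_one_left (by positivity) (iterate_Tgreedy_one_mem_Icc β N).2)
      (tendsto_pow_atTop_nhds_zero_of_lt_one (by positivity) (inv_lt_one_of_one_lt₀ hβ))
  simpa using hrem.const_sub 1

lemma tsum_natFloor_mul_ofReal_inv_pow (hβ : 1 < β) :
    ∑' n : ℕ, (⌊β * (Tgreedy β)^[n] 1⌋₊ : ℝ≥0∞) * ENNReal.ofReal β⁻¹ ^ (n + 1) = 1 := by
  have hβ0 : 0 < β := by linarith
  have hterm : ∀ n : ℕ, (⌊β * (Tgreedy β)^[n] 1⌋₊ : ℝ≥0∞) * ENNReal.ofReal β⁻¹ ^ (n + 1)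
      = ENNReal.ofReal ((⌊β * (Tgreedy β)^[n] 1⌋₊ : ℝ) * β⁻¹ ^ (n + 1)) := fun n => by
    rw [ENNReal.ofReal_mul (Nat.cast_nonneg _), ENNReal.ofReal_natCast,
      ENNReal.ofReal_pow (by positivity)]
  simp only [hterm]
  rw [← ENNReal.ofReal_tsum_of_nonneg (fun n => by positivity)
    (hasSum_natFloor_mul_inv_pow hβ).summable, (hasSum_natFloor_mul_inv_pow hβ).tsum_eq,
    ENNReal.ofReal_one]

lemma lintegral_dParry_preimage_Tgreedy (hβ : 1 < β) {A : Set ℝ} (hA : MeasurableSet A) :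
    ∫⁻ x in Tgreedy β ⁻¹' A ∩ Icc 0 1, ENNReal.ofReal (dParry β x)
      = ∫⁻ x in A ∩ Icc 0 1, ENNReal.ofReal (dParry β x) := by
  rw [lintegral_ofReal_dParry hβ, lintegral_ofReal_dParry hβ]
  set r := ENNReal.ofReal β⁻¹
  set M : ℕ → ℝ≥0∞ := fun n => volume (A ∩ Ico 0 ((Tgreedy β)^[n] 1))
  have hstep : ∀ n : ℕ, r ^ n * volume (Tgreedy β ⁻¹' A ∩ Ico 0 ((Tgreedy β)^[n] 1))
      = (⌊β * (Tgreedy β)^[n] 1⌋₊ * r ^ (n + 1)) * M 0 + r ^ (n + 1) * M (n + 1) := fun n => by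
    rw [volume_preimage_Tgreedy_inter_Ico (by linarith) hA (iterate_Tgreedy_one_mem_Icc β n).1,
      ← Function.iterate_succ_apply' (Tgreedy β)]
    simp only [M, Function.iterate_zero_apply]
    ring
  calc ∑' n : ℕ, r ^ n * volume (Tgreedy β ⁻¹' A ∩ Ico 0 ((Tgreedy β)^[n] 1))
      = ∑' n : ℕ, (⌊β * (Tgreedy β)^[n] 1⌋₊ * r ^ (n + 1)) * M 0
          + ∑' n : ℕ, r ^ (n + 1) * M (n + 1) := by
        simp only [hstep]
        exact ENNReal.tsum_add
    _ = M 0 + ∑' n : ℕ, r ^ (n + 1) * M (n + 1) := by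
        rw [ENNReal.tsum_mul_right, tsum_natFloor_mul_ofReal_inv_pow hβ, one_mul]
    _ = ∑' n : ℕ, r ^ n * M n := by
        rw [tsum_eq_zero_add' (f := fun n => r ^ n * M n) ENNReal.summable, pow_zero, one_mul]

end Parry

/-- Parry: `0 < ∫_0^1 d dλ < ∞` (finiteness as integrability), and the
probability measure on `[0,1]` with density `d / ∫ d` is `T`-invariant. -/
theorem stmt16 (β : ℝ) (hβ : 1 < β) :
    MeasureTheory.IntegrableOn (dParry β) (Set.Icc (0 : ℝ) 1) volume ∧
    0 < ∫ x in Set.Icc (0 : ℝ) 1, dParry β x ∧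
    ∀ A : Set ℝ, MeasurableSet A →
      ((volume.restrict (Set.Icc (0 : ℝ) 1)).withDensity
          (fun x => ENNReal.ofReal (dParry β x / ∫ y in Set.Icc (0 : ℝ) 1, dParry β y)))
        (Tgreedy β ⁻¹' A)
      = ((volume.restrict (Set.Icc (0 : ℝ) 1)).withDensity
          (fun x => ENNReal.ofReal (dParry β x / ∫ y in Set.Icc (0 : ℝ) 1, dParry β y))) A := by
  refine ⟨integrableOn_dParry hβ, integral_dParry_pos hβ, fun A hA => ?_⟩
  have hpre : MeasurableSet (Tgreedy β ⁻¹' A) := measurable_Tgreedy β hA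
  simp only [withDensity_apply _ hpre, withDensity_apply _ hA, Measure.restrict_restrict hpre,
    Measure.restrict_restrict hA, div_eq_mul_inv,
    ENNReal.ofReal_mul (dParry_nonneg (zero_lt_one.trans hβ) _)]
  rw [lintegral_mul_const' _ _ ENNReal.ofReal_ne_top, lintegral_mul_const' _ _ ENNReal.ofReal_ne_top,
    lintegral_dParry_preimage_Tgreedy hβ hA]

end RandomBeta
end

section
/- For every x ∈ I_β and every n ∈ ℕ, the number of admissible prefixes of β-expansions of x is given by 𝒩ₙ(x;β) = ∫_Ω 2^{h(ω,x,n)} dm(ω), where h(ω,x,n) = #{0 ≤ i ≤ n−1 : π₂(K_β^i(ω,x)) ∈ S}. -/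
open MeasureTheory Set Filter
open scoped Classical ENNReal

namespace RandomBeta

/-!
Follow the `K_β`-orbit of `(ω, x)` and record the digits it produces. A point of `L` or `R`
forces its digit, while a point of `S` reads (and consumes) the next coin of `ω`. Hence every
digit sequence produced is a β-expansion of `x`, and conversely, for an expansion `b` of `x`
the coin sequences producing the first `n` digits of `b` form a cylinder whose length `h` is the
number of visits to `S` among the first `n` remainders of `b`. That cylinder has measure
`2^{-h}` and `2^{h(ω,x,n)} = 2^h` on it, so each admissible prefix contributes exactly `1` to
the integral.
-/

section Expansion

variable {β x : ℝ} {b b' : ℕ → Bool}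

def remainder (β x : ℝ) (b : ℕ → Bool) : ℕ → ℝ
  | 0 => x
  | k + 1 => β * remainder β x b k - if b k then 1 else 0

lemma remainder_congr {k : ℕ} (h : ∀ j < k, b j = b' j) :
    remainder β x b k = remainder β x b' k := by
  induction k with
  | zero => rfl
  | succ k ih => simp only [remainder, ih fun j hj => h j (by omega), h k k.lt_succ_self]

lemma remainder_succ_shift (k : ℕ) :
    remainder β x b (k + 1) = remainder β (remainder β x b 1) (shift b) k := by
  induction k with
  | zero => rfl
  | succ k ih => rw [remainder, ih]; rfl

lemma eq_sum_add_remainder (hβ : β ≠ 0) (n : ℕ) :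
    x = ∑ i ∈ Finset.range n, (if b i then (1 : ℝ) else 0) * (β ^ (i + 1))⁻¹
      + (β ^ n)⁻¹ * remainder β x b n := by
  induction n with
  | zero => simp [remainder]
  | succ n ih =>
    conv_lhs => rw [ih]
    rw [Finset.sum_range_succ, remainder]
    field_simp
    ring

lemma hasSum_inv_pow_succ (hβ : 1 < β) :
    HasSum (fun i : ℕ => (β ^ (i + 1))⁻¹) (1 / (β - 1)) := by
  have h := (hasSum_geometric_of_lt_one (by positivity) (inv_lt_one_of_one_lt₀ hβ)).mul_left β⁻¹
  have hterm : (fun i : ℕ => (β ^ (i + 1))⁻¹) = fun i => β⁻¹ * β⁻¹ ^ i := by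
    ext i; rw [pow_succ', mul_inv, inv_pow]
  have hsum : 1 / (β - 1) = β⁻¹ * (1 - β⁻¹)⁻¹ := by
    have : β - 1 ≠ 0 := by linarith
    field_simp
  rwa [hterm, hsum]

lemma piB_term_mem_Icc (hβ : 0 ≤ β) (b : ℕ → Bool) (i : ℕ) :
    (if b i then (1 : ℝ) else 0) * (β ^ (i + 1))⁻¹ ∈ Icc 0 (β ^ (i + 1))⁻¹ := by
  have : (0 : ℝ) ≤ (β ^ (i + 1))⁻¹ := by positivity
  split_ifs <;> simp [this]

lemma summable_piB_term (hβ : 1 < β) (b : ℕ → Bool) :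
    Summable fun i => (if b i then (1 : ℝ) else 0) * (β ^ (i + 1))⁻¹ :=
  (hasSum_inv_pow_succ hβ).summable.of_nonneg_of_le
    (fun i => (piB_term_mem_Icc (by linarith) b i).1)
    fun i => (piB_term_mem_Icc (by linarith) b i).2

lemma piB_mem_Ibeta (hβ : 1 < β) (b : ℕ → Bool) : piB β b ∈ Ibeta β :=
  ⟨tsum_nonneg fun i => (piB_term_mem_Icc (by linarith) b i).1,
    hasSum_le (fun i => (piB_term_mem_Icc (by linarith) b i).2) (summable_piB_term hβ b).hasSum
      (hasSum_inv_pow_succ hβ)⟩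

lemma piB_eq_sum_add (hβ : 1 < β) (b : ℕ → Bool) (n : ℕ) :
    piB β b = ∑ i ∈ Finset.range n, (if b i then (1 : ℝ) else 0) * (β ^ (i + 1))⁻¹
      + (β ^ n)⁻¹ * piB β fun i => b (i + n) := by
  rw [piB, ← (summable_piB_term hβ b).sum_add_tsum_nat_add n, piB, ← tsum_mul_left]
  congr 1
  refine tsum_congr fun i => ?_
  rw [add_right_comm, pow_add, mul_inv]
  ring

lemma remainder_eq_piB (hβ : 1 < β) (hx : x = piB β b) (n : ℕ) :
    remainder β x b n = piB β fun i => b (i + n) := by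
  have h := (eq_sum_add_remainder (b := b) (x := x) (by positivity) n).symm.trans
    (hx.trans (piB_eq_sum_add hβ b n))
  exact mul_left_cancel₀ (by positivity) (add_left_cancel h)

lemma eq_piB_of_abs_remainder_le (hβ : 1 < β) {C : ℝ} (h : ∀ k, |remainder β x b k| ≤ C) :
    x = piB β b := by
  have hsum := (summable_piB_term hβ b).hasSum.tendsto_sum_nat
  have htail : Tendsto (fun n => (β ^ n)⁻¹ * remainder β x b n) atTop (nhds 0) := by
    have hpow := tendsto_pow_atTop_nhds_zero_of_lt_one (by positivity) (inv_lt_one_of_one_lt₀ hβ)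
    refine squeeze_zero_norm (fun n => ?_) (by simpa using hpow.mul_const C)
    rw [norm_mul, norm_inv, norm_pow, Real.norm_of_nonneg (by positivity), Real.norm_eq_abs]
    exact mul_le_mul_of_nonneg_left (h n) (by positivity)
  have hconst : Tendsto (fun n => ∑ i ∈ Finset.range n, (if b i then (1 : ℝ) else 0) *
      (β ^ (i + 1))⁻¹ + (β ^ n)⁻¹ * remainder β x b n) atTop (nhds x) :=
    tendsto_const_nhds.congr fun n => eq_sum_add_remainder (by positivity) n
  have h := tendsto_nhds_unique hconst (hsum.add htail)
  rwa [add_zero] at h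

end Expansion

noncomputable section Dynamics

variable {β x : ℝ} {b b' : ℕ → Bool}

lemma Kmap_fst (p : (ℕ → Bool) × ℝ) :
    (Kmap β p).1 = if p.2 ∈ Sset β then shift p.1 else p.1 := by
  unfold Kmap Sset
  split_ifs <;> simp_all [Set.mem_Icc] <;> linarith

lemma Kmap_snd (p : (ℕ → Bool) × ℝ) :
    (Kmap β p).2 = β * p.2 - if digitB β p.2 (p.1 0) then 1 else 0 := by
  unfold Kmap digitB
  split_ifs <;> simp_all

lemma Kmap_eq (ω : ℕ → Bool) :
    Kmap β (ω, x) = (if x ∈ Sset β then shift ω else ω,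
      β * x - if digitB β x (ω 0) then 1 else 0) :=
  Prod.ext (Kmap_fst _) (Kmap_snd _)

lemma digitB_of_mem_Sset (hx : x ∈ Sset β) (a : Bool) : digitB β x a = a := by
  rw [digitB, if_neg (not_lt.2 hx.1), if_pos hx.2]

lemma digitB_eq_of_notMem_Sset (hβ : 1 < β) (hx : x ∉ Sset β) {c : Bool}
    (hc : β * x - (if c then 1 else 0) ∈ Ibeta β) (a : Bool) : digitB β x a = c := by
  have hL : β * (1 / β) = 1 := by field_simp
  have hR : β * (1 / (β * (β - 1))) = 1 / (β - 1) := by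
    have : β - 1 ≠ 0 := by linarith
    field_simp
  have hβ0 : 0 < β := by linarith
  obtain ⟨hc0, hc1⟩ := hc
  unfold digitB
  split_ifs with h1 h2
  · cases c
    · rfl
    · have := mul_lt_mul_of_pos_left h1 hβ0
      simp only [if_true] at hc0
      linarith
  · exact absurd ⟨not_lt.1 h1, h2⟩ hx
  · cases c
    · have := mul_lt_mul_of_pos_left (not_le.1 h2) hβ0
      simp only [Bool.false_eq_true, if_false] at hc1
      linarith
    · rfl

lemma Kmap_snd_mem_Ibeta (hβ : 1 < β) (hβ2 : β ≤ 2) {p : (ℕ → Bool) × ℝ}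
    (hp : p.2 ∈ Ibeta β) : (Kmap β p).2 ∈ Ibeta β := by
  obtain ⟨hp0, hp1⟩ := hp
  have hβ0 : 0 < β := by linarith
  have hβ1 : β - 1 ≠ 0 := by linarith
  have hL : β * (1 / β) = 1 := by field_simp
  have hR : β * (1 / (β * (β - 1))) = 1 / (β - 1) := by field_simp
  have hI : β * (1 / (β - 1)) = 1 / (β - 1) + 1 := by field_simp; ring
  have hone : 1 ≤ 1 / (β - 1) := by rw [le_div_iff₀ (by linarith)]; linarith
  have hmul := mul_le_mul_of_nonneg_left hp1 hβ0.le
  rw [Kmap_snd]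
  rcases lt_or_ge p.2 (1 / β) with h1 | h1
  · have := mul_lt_mul_of_pos_left h1 hβ0
    simp only [digitB, if_pos h1, Bool.false_eq_true, if_false, sub_zero]
    exact ⟨by positivity, by linarith⟩
  rcases le_or_gt p.2 (1 / (β * (β - 1))) with h2 | h2
  · have := mul_le_mul_of_nonneg_left h1 hβ0.le
    have := mul_le_mul_of_nonneg_left h2 hβ0.le
    simp only [digitB, if_neg (not_lt.2 h1), if_pos h2]
    split_ifs <;> constructor <;> linarith
  · have := mul_lt_mul_of_pos_left h2 hβ0
    simp only [digitB, if_neg (not_lt.2 h1), if_neg (not_le.2 h2), if_true]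
    constructor <;> linarith

def orbitDigit (β : ℝ) (p : (ℕ → Bool) × ℝ) (i : ℕ) : Bool :=
  digitB β ((Kmap β)^[i] p).2 (((Kmap β)^[i] p).1 0)

lemma orbitDigit_succ (p : (ℕ → Bool) × ℝ) (i : ℕ) :
    orbitDigit β p (i + 1) = orbitDigit β (Kmap β p) i := by
  simp only [orbitDigit, Function.iterate_succ_apply]

lemma remainder_orbitDigit (p : (ℕ → Bool) × ℝ) (i : ℕ) :
    remainder β p.2 (orbitDigit β p) i = ((Kmap β)^[i] p).2 := by
  induction i with
  | zero => rfl
  | succ i ih => rw [remainder, ih, Function.iterate_succ_apply', Kmap_snd]; rfl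

lemma eq_piB_orbitDigit (hβ : 1 < β) (hβ2 : β ≤ 2) (ω : ℕ → Bool) (hx : x ∈ Ibeta β) :
    x = piB β (orbitDigit β (ω, x)) := by
  refine eq_piB_of_abs_remainder_le hβ (C := 1 / (β - 1)) fun k => ?_
  have hk : ((Kmap β)^[k] (ω, x)).2 ∈ Ibeta β := by
    induction k with
    | zero => exact hx
    | succ k ih => rw [Function.iterate_succ_apply']; exact Kmap_snd_mem_Ibeta hβ hβ2 ih
  rw [← remainder_orbitDigit] at hk
  exact abs_le.2 ⟨by linarith [hk.1, hk.2], hk.2⟩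

def sVisits (β x : ℝ) (b : ℕ → Bool) (n : ℕ) : ℕ :=
  ((Finset.range n).filter fun k => remainder β x b k ∈ Sset β).card

lemma sVisits_congr {n : ℕ} (h : ∀ j < n, b j = b' j) :
    sVisits β x b n = sVisits β x b' n := by
  unfold sVisits
  congr 1
  exact Finset.filter_congr fun k hk => by
    rw [remainder_congr fun j hj => h j (hj.trans (Finset.mem_range.1 hk))]

lemma sVisits_succ (n : ℕ) :
    sVisits β x b (n + 1) =
      sVisits β (remainder β x b 1) (shift b) n + if x ∈ Sset β then 1 else 0 := by
  simp only [sVisits, Finset.card_filter, Finset.sum_range_succ']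
  exact congrArg (· + _) (Finset.sum_congr rfl fun k _ => by rw [remainder_succ_shift])

lemma hCount_eq_sVisits (ω : ℕ → Bool) (n : ℕ) :
    hCount β ω x n = sVisits β x (orbitDigit β (ω, x)) n := by
  unfold hCount sVisits
  congr 1
  exact Finset.filter_congr fun k _ => by rw [← remainder_orbitDigit (ω, x) k]

end Dynamics

section Cylinder

variable {m : Measure (ℕ → Bool)} {s : Set (ℕ → Bool)} {k : ℕ}

def IsCylinder (s : Set (ℕ → Bool)) (k : ℕ) : Prop :=
  ∃ w : Fin k → Bool, s = {ω | ∀ j : Fin k, ω j = w j}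

lemma isCylinder_univ : IsCylinder univ 0 :=
  ⟨Fin.elim0, by simp⟩

lemma IsCylinder.cons (hs : IsCylinder s k) (a : Bool) :
    IsCylinder {ω | ω 0 = a ∧ shift ω ∈ s} (k + 1) := by
  obtain ⟨w, rfl⟩ := hs
  refine ⟨Fin.cons a w, ?_⟩
  ext ω
  simp [Fin.forall_fin_succ, shift]

lemma IsCylinder.measurableSet (hs : IsCylinder s k) : MeasurableSet s := by
  obtain ⟨w, rfl⟩ := hs
  simp only [ofPred_forall]
  exact .iInter fun j => measurableSet_eq_fun (measurable_pi_apply _) measurable_const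

lemma IsBernoulliHalf.measureReal_eq (hm : IsBernoulliHalf m) (hs : IsCylinder s k) :
    m.real s = 2⁻¹ ^ k := by
  obtain ⟨w, rfl⟩ := hs
  simp [measureReal_def, hm.2 k w]

lemma IsBernoulliHalf.setIntegral_eq_one (hm : IsBernoulliHalf m) (hs : IsCylinder s k)
    {f : (ℕ → Bool) → ℝ} (hf : EqOn f (fun _ => 2 ^ k) s) : ∫ ω in s, f ω ∂m = 1 := by
  rw [setIntegral_congr_fun hs.measurableSet hf, setIntegral_const, hm.measureReal_eq hs,
    smul_eq_mul, ← mul_pow]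
  norm_num

lemma IsBernoulliHalf.integral_eq_card {α : Type*} (hm : IsBernoulliHalf m)
    (W : (ℕ → Bool) → α) (E : Finset α) (hW : ∀ ω, W ω ∈ E) {f : (ℕ → Bool) → ℝ}
    (hf : ∀ a ∈ E, ∃ k, IsCylinder (W ⁻¹' {a}) k ∧ EqOn f (fun _ => 2 ^ k) (W ⁻¹' {a})) :
    ∫ ω, f ω ∂m = E.card := by
  have := hm.1
  choose! k hk hfk using hf
  have hcover : ⋃ a ∈ E, W ⁻¹' {a} = univ :=
    eq_univ_of_forall fun ω => mem_iUnion₂.2 ⟨W ω, hW ω, rfl⟩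
  calc ∫ ω, f ω ∂m = ∫ ω in ⋃ a ∈ E, W ⁻¹' {a}, f ω ∂m := by rw [hcover, setIntegral_univ]
    _ = ∑ a ∈ E, ∫ ω in W ⁻¹' {a}, f ω ∂m :=
      integral_biUnion_finset E (fun a ha => (hk a ha).measurableSet)
        ((pairwiseDisjoint_fiber W _).subset (subset_univ _)) fun a ha =>
          IntegrableOn.congr_fun integrableOn_const (hfk a ha).symm (hk a ha).measurableSet
    _ = E.card := by
      rw [Finset.card_eq_sum_ones, Nat.cast_sum, Nat.cast_one]
      exact Finset.sum_congr rfl fun a ha => hm.setIntegral_eq_one (hk a ha) (hfk a ha)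

end Cylinder

noncomputable section Prefix

variable {β x : ℝ} {b : ℕ → Bool} {n : ℕ}

def prefixSet (β x : ℝ) (b : ℕ → Bool) (n : ℕ) : Set (ℕ → Bool) :=
  {ω | ∀ i < n, orbitDigit β (ω, x) i = b i}

lemma mem_prefixSet_succ {ω : ℕ → Bool} :
    ω ∈ prefixSet β x b (n + 1) ↔
      digitB β x (ω 0) = b 0 ∧ ∀ i < n, orbitDigit β (Kmap β (ω, x)) i = shift b i := by
  simp only [prefixSet, mem_ofPred_eq, Nat.forall_lt_succ_left', orbitDigit_succ, shift]
  rfl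

lemma prefixSet_succ_of_mem_Sset (hx : x ∈ Sset β) :
    prefixSet β x b (n + 1) =
      {ω | ω 0 = b 0 ∧ shift ω ∈ prefixSet β (remainder β x b 1) (shift b) n} := by
  ext ω
  rw [mem_prefixSet_succ, digitB_of_mem_Sset hx, mem_ofPred_eq]
  refine and_congr_right fun h0 => ?_
  rw [Kmap_eq, if_pos hx, digitB_of_mem_Sset hx, h0]
  rfl

lemma prefixSet_succ_of_notMem_Sset (hx : x ∉ Sset β) (hb : ∀ a, digitB β x a = b 0) :
    prefixSet β x b (n + 1) = prefixSet β (remainder β x b 1) (shift b) n := by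
  ext ω
  rw [mem_prefixSet_succ, hb, Kmap_eq, if_neg hx, hb]
  simp only [true_and]
  rfl

lemma isCylinder_prefixSet (hβ : 1 < β) (h : ∀ k, remainder β x b k ∈ Ibeta β) (n : ℕ) :
    IsCylinder (prefixSet β x b n) (sVisits β x b n) := by
  induction n generalizing x b with
  | zero => simpa [prefixSet, sVisits] using isCylinder_univ
  | succ n ih =>
    have h' : ∀ k, remainder β (remainder β x b 1) (shift b) k ∈ Ibeta β := fun k => by
      rw [← remainder_succ_shift]; exact h (k + 1)
    rw [sVisits_succ]
    by_cases hx : x ∈ Sset β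
    · rw [prefixSet_succ_of_mem_Sset hx, if_pos hx]
      exact (ih h').cons (b 0)
    · rw [prefixSet_succ_of_notMem_Sset hx (digitB_eq_of_notMem_Sset hβ hx (h 1)),
        if_neg hx]
      exact ih h'

lemma hCount_eq_sVisits_of_mem_prefixSet {ω : ℕ → Bool} (hω : ω ∈ prefixSet β x b n) :
    hCount β ω x n = sVisits β x b n := by
  rw [hCount_eq_sVisits, sVisits_congr hω]

def orbitWord (β x : ℝ) (n : ℕ) (ω : ℕ → Bool) : Fin n → Bool :=
  fun i => orbitDigit β (ω, x) i

lemma orbitWord_preimage_eq_prefixSet {a : Fin n → Bool}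
    (hb : ∀ i : Fin n, b i = a i) : orbitWord β x n ⁻¹' {a} = prefixSet β x b n := by
  ext ω
  simp only [mem_preimage, mem_singleton_iff, funext_iff, orbitWord, prefixSet, mem_ofPred_eq,
    Fin.forall_iff, ← hb]

lemma exists_isCylinder_orbitWord_preimage (hβ : 1 < β) {a : Fin n → Bool}
    (hb : ∀ i : Fin n, b i = a i) (hx : x = piB β b) :
    ∃ k, IsCylinder (orbitWord β x n ⁻¹' {a}) k ∧
      EqOn (fun ω => (2 : ℝ) ^ hCount β ω x n) (fun _ => 2 ^ k)
        (orbitWord β x n ⁻¹' {a}) := by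
  rw [orbitWord_preimage_eq_prefixSet hb]
  refine ⟨_, isCylinder_prefixSet hβ (fun k => ?_) n,
    fun ω hω => congrArg (2 ^ ·) (hCount_eq_sVisits_of_mem_prefixSet hω)⟩
  rw [remainder_eq_piB hβ hx]
  exact piB_mem_Ibeta hβ _

end Prefix

/-- `𝒩ₙ(x;β) = ∫_Ω 2^{h(ω,x,n)} dm(ω)` where
`h(ω,x,n) = #{0 ≤ i ≤ n-1 : π₂(K_β^i(ω,x)) ∈ S}`. -/
theorem stmt17 (β : ℝ) (hβ : 1 < β ∧ β < 2) (m : Measure (ℕ → Bool))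
    (hm : IsBernoulliHalf m) (x : ℝ) (hx : x ∈ Ibeta β) (n : ℕ) :
    (Ncount β x n : ℝ) = ∫ ω, (2 : ℝ) ^ (hCount β ω x n) ∂m := by
  obtain ⟨hβ1, hβ2⟩ := hβ
  set E := Finset.univ.filter fun a : Fin n → Bool =>
    ∃ b : ℕ → Bool, (∀ i : Fin n, b i = a i) ∧ x = piB β b
  have hN : Ncount β x n = E.card := by
    rw [Ncount, ← Set.ncard_coe_finset]
    simp [E]
  rw [hN, hm.integral_eq_card (orbitWord β x n) E]
  · intro ω
    simpa [E] using ⟨orbitDigit β (ω, x), fun _ => rfl, eq_piB_orbitDigit hβ1 hβ2.le ω hx⟩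
  · intro a ha
    obtain ⟨b, hba, hxb⟩ := (Finset.mem_filter.1 ha).2
    exact exists_isCylinder_orbitWord_preimage hβ1 hba hxb

end RandomBeta
end
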